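/- With pivot derivations v_n as above, for all n ≥ 1 and j ≥ 0 the action on the variable t_j is: v_n(t_j) = t_{n−1} t_n ⋯ t_{j−2} if n < j; v_n(t_j) = 1 if n = j; and v_n(t_j) = 0 if n > j. -/

import Mathlib

/-!
Unfolding `v_n = ∂_n + t_{n−1} v_{n+1}` repeatedly gives the three cases. For `n > j` the
`∂`-term never fires, so `v_n(t_j)` is divisible by `t_k` for every `k ≥ n − 1`; a polynomial
divisible by infinitely many variables vanishes, since it involves only finitely many. This
gives `v_n(t_j) = 0` for `n > j`, hence `v_n(t_n) = 1`, and for `n < j` the recursion peels off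
one factor `t_{n−1}` at a time until it reaches `v_j(t_j) = 1`.
-/

open MvPolynomial

namespace MvPolynomial

variable {R σ : Type*} [CommSemiring R]

theorem eq_zero_of_X_dvd_of_notMem_vars {p : MvPolynomial σ R} {i : σ} (hdvd : X i ∣ p)
    (hi : i ∉ p.vars) : p = 0 := by
  classical
  obtain ⟨q, rfl⟩ := hdvd
  ext d
  by_contra hd
  have hid : i ∉ d.support := fun h =>
    hi ((mem_vars_iff_mem_support i).2 ⟨d, mem_support_iff.2 hd, h⟩)
  rw [coeff_X_mul', if_neg hid] at hd
  exact hd (coeff_zero d).symm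

theorem eq_zero_of_infinite_setOf_X_dvd {p : MvPolynomial σ R}
    (h : {i | X i ∣ p}.Infinite) : p = 0 :=
  let ⟨_, hdvd, hi⟩ := h.exists_notMem_finset p.vars
  eq_zero_of_X_dvd_of_notMem_vars hdvd hi

end MvPolynomial

namespace PivotRecursion

variable {R : Type*} [CommSemiring R] {a : ℕ → ℕ → MvPolynomial ℕ R}
  (ha : ∀ i, 1 ≤ i → ∀ j, a i j = (if i = j then 1 else 0) + X (i - 1) * a (i + 1) j)
include ha

theorem X_dvd_of_lt (m : ℕ) : ∀ n j, 1 ≤ n → j < n → X (n - 1 + m) ∣ a n j := by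
  induction m with
  | zero =>
    intro n j hn hj
    rw [ha n hn j, if_neg hj.ne', zero_add]
    exact dvd_mul_right _ _
  | succ m ih =>
    intro n j hn hj
    rw [ha n hn j, if_neg hj.ne', zero_add, show n - 1 + (m + 1) = n + 1 - 1 + m by omega]
    exact (ih (n + 1) j (by omega) (by omega)).mul_left _

theorem eq_zero_of_lt {n j : ℕ} (hn : 1 ≤ n) (hj : j < n) : a n j = 0 := by
  refine eq_zero_of_infinite_setOf_X_dvd ((Set.Ici_infinite (n - 1)).mono fun k hk => ?_)
  obtain ⟨m, rfl⟩ := Nat.exists_eq_add_of_le (Set.mem_Ici.1 hk)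
  exact X_dvd_of_lt ha m n j hn hj

theorem eq_one (n : ℕ) (hn : 1 ≤ n) : a n n = 1 := by
  rw [ha n hn n, if_pos rfl, eq_zero_of_lt ha (by omega) n.lt_succ_self, mul_zero, add_zero]

theorem eq_prod_of_lt (d : ℕ) :
    ∀ n, 1 ≤ n → a n (n + d + 1) = ∏ k ∈ Finset.Ico (n - 1) (n + d), X k := by
  induction d with
  | zero =>
    intro n hn
    rw [ha n hn, if_neg (by omega), eq_one ha (n + 0 + 1) (by omega), zero_add, mul_one,
      show n + 0 = n - 1 + 1 by omega, Nat.Ico_succ_singleton, Finset.prod_singleton]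
  | succ d ih =>
    intro n hn
    rw [ha n hn, if_neg (by omega), zero_add, show n + (d + 1) + 1 = n + 1 + d + 1 by omega,
      ih (n + 1) (by omega), Finset.prod_eq_prod_Ico_succ_bot (a := n - 1) (by omega),
      show n + 1 - 1 = n - 1 + 1 by omega, show n + 1 + d = n + (d + 1) by omega]

end PivotRecursion

/-- The action of the pivot special derivations `v_n = ∂_n + t_{n−1} v_{n+1}` on the
variables: `v_n(t_j) = t_{n−1}⋯t_{j−2}` if `n < j`, `1` if `n = j`, `0` if `n > j`. -/
theorem pivot_action_on_variables (K : Type*) [Field K]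
    (v : ℕ → Derivation K (MvPolynomial ℕ K) (MvPolynomial ℕ K))
    (hv : ∀ i, 1 ≤ i → ∀ j : ℕ,
      v i (X j) = (if i = j then 1 else 0) + X (i - 1) * v (i + 1) (X j)) :
    ∀ n, 1 ≤ n → ∀ j : ℕ,
      v n (X j) =
        if n < j then ∏ k ∈ Finset.Ico (n - 1) (j - 1), X k
        else if n = j then 1 else 0 := by
  intro n hn j
  rcases lt_trichotomy n j with h | rfl | h
  · obtain ⟨d, rfl⟩ := Nat.exists_eq_add_of_lt h
    rw [if_pos h, Nat.add_sub_cancel, PivotRecursion.eq_prod_of_lt hv d n hn]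
  · rw [if_neg n.lt_irrefl, if_pos rfl, PivotRecursion.eq_one hv n hn]
  · rw [if_neg h.not_gt, if_neg h.ne', PivotRecursion.eq_zero_of_lt hv hn h]
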